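/- For K(x) = -log|tanh x| and 0 < σ ≤ 1/2, the function M := K - L (where L is the affine regularization of K on [-σ,σ]) satisfies ∫_ℝ M(x) dx ≤ C σ(|log σ| + 1) for a constant C > 0 independent of σ. In particular ∫_ℝ M ≤ ∫_{-σ}^{σ} K = 2∫₀^σ K. -/

import Mathlib

open Real MeasureTheory intervalIntegral Set

noncomputable def Kfun (x : ℝ) : ℝ := -Real.log |Real.tanh x|

noncomputable def Lfun (σ x : ℝ) : ℝ :=
  if |x| ≤ σ then Kfun σ + (|x| - σ) * deriv Kfun σ else Kfun |x|

noncomputable def Mfun (σ x : ℝ) : ℝ := Kfun x - Lfun σ x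

lemma Kfun_even (x : ℝ) : Kfun (-x) = Kfun x := by
  simp [Kfun, Real.tanh_neg]

lemma Kfun_abs (x : ℝ) : Kfun |x| = Kfun x := by
  rcases abs_choice x with h | h <;> rw [h]
  exact Kfun_even x

lemma tanh_pos {x : ℝ} (hx : 0 < x) : 0 < Real.tanh x := by
  rw [Real.tanh_eq_sinh_div_cosh]
  exact div_pos (by rwa [Real.sinh_pos_iff]) (Real.cosh_pos x)

lemma abs_tanh_le_one (x : ℝ) : |Real.tanh x| ≤ 1 := by
  rw [Real.tanh_eq_sinh_div_cosh, abs_div, abs_of_pos (Real.cosh_pos x),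
    div_le_one (Real.cosh_pos x)]
  nlinarith [Real.cosh_sq x, Real.cosh_pos x, abs_nonneg (Real.sinh x), sq_abs (Real.sinh x)]

lemma Kfun_nonneg (x : ℝ) : 0 ≤ Kfun x := by
  simp only [Kfun, neg_nonneg]
  exact Real.log_nonpos (abs_nonneg _) (abs_tanh_le_one x)

lemma half_le_tanh {x : ℝ} (hx : 0 < x) (hx2 : x ≤ 1/2) : x / 2 ≤ Real.tanh x := by
  rw [Real.tanh_eq_sinh_div_cosh, Real.sinh_eq, Real.cosh_eq,
    div_le_div_iff₀ two_pos (by positivity)]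
  have hab : Real.exp (-x) * Real.exp x = 1 := by
    rw [← Real.exp_add]; simp
  have h1 : 1 + 2*x ≤ Real.exp x * Real.exp x := by
    rw [← Real.exp_add]
    have := Real.add_one_le_exp (x + x)
    linarith
  have h2 : Real.exp x * Real.exp x ≤ 2.7182818286 := by
    rw [← Real.exp_add]
    calc Real.exp (x + x) ≤ Real.exp 1 := Real.exp_le_exp.2 (by linarith)
    _ ≤ 2.7182818286 := Real.exp_one_lt_d9.le
  have h3 : 0 < Real.exp x := Real.exp_pos x
  have h4 : 0 < Real.exp (-x) := Real.exp_pos (-x)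
  nlinarith [mul_pos h3 h4]

lemma Kfun_le {x : ℝ} (hx : 0 < x) (hx2 : x ≤ 1/2) :
    Kfun x ≤ Real.log 2 - Real.log x := by
  have h := half_le_tanh hx hx2
  have ht : 0 < Real.tanh x := tanh_pos hx
  have : Real.log (x/2) ≤ Real.log (Real.tanh x) := Real.log_le_log (by positivity) h
  rw [Real.log_div (ne_of_gt hx) two_ne_zero] at this
  simp only [Kfun, abs_of_pos ht]
  linarith

/-- derivative of Kfun at positive points -/
lemma Kfun_hasDerivAt {σ : ℝ} (hσ : 0 < σ) :
    HasDerivAt Kfun (Real.sinh σ / Real.cosh σ - Real.cosh σ / Real.sinh σ) σ := by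
  have hs : Real.sinh σ ≠ 0 := ne_of_gt (by rwa [Real.sinh_pos_iff])
  have hd : HasDerivAt (fun x => Real.log (Real.cosh x) - Real.log (Real.sinh x))
      (Real.sinh σ / Real.cosh σ - Real.cosh σ / Real.sinh σ) σ := by
    exact ((Real.hasDerivAt_cosh σ).log (ne_of_gt (Real.cosh_pos σ))).sub
      ((Real.hasDerivAt_sinh σ).log hs)
  apply hd.congr_of_eventuallyEq
  have : Set.Ioi (0:ℝ) ∈ nhds σ := Ioi_mem_nhds hσ
  filter_upwards [this] with x hx
  have hx : (0:ℝ) < x := hx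
  have hsx : 0 < Real.sinh x := by rwa [Real.sinh_pos_iff]
  have htx : 0 < Real.tanh x := tanh_pos hx
  rw [Kfun, abs_of_pos htx, Real.tanh_eq_sinh_div_cosh,
    Real.log_div (ne_of_gt hsx) (ne_of_gt (Real.cosh_pos x))]
  ring

lemma deriv_Kfun_nonpos {σ : ℝ} (hσ : 0 < σ) : deriv Kfun σ ≤ 0 := by
  rw [(Kfun_hasDerivAt hσ).deriv]
  have hs : 0 < Real.sinh σ := by rwa [Real.sinh_pos_iff]
  have hc : 0 < Real.cosh σ := Real.cosh_pos σ
  rw [sub_nonpos, div_le_div_iff₀ hc hs]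
  nlinarith [Real.cosh_sq σ]

/-- integrability of the dominating function -/
lemma integrableOn_dom {σ : ℝ} (hσ : 0 < σ) (hσ2 : σ ≤ 1/2) :
    IntegrableOn (fun x => Real.log 2 - Real.log x) (Set.Ioc 0 σ) volume := by
  apply integrableOn_deriv_of_nonneg (g := fun x => x * Real.log 2 + x - x * Real.log x)
  · exact ((continuous_id.mul continuous_const).add continuous_id).continuousOn.sub
      Real.continuous_mul_log.continuousOn
  · intro x hx
    have hx0 : 0 < x := hx.1
    have h1 : HasDerivAt (fun x : ℝ => x * Real.log x) (Real.log x + 1) x :=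
      Real.hasDerivAt_mul_log (ne_of_gt hx0)
    have h2 : HasDerivAt (fun x : ℝ => x * Real.log 2 + x) (1 * Real.log 2 + 1) x :=
      ((hasDerivAt_id x).mul_const _).add (hasDerivAt_id x)
    have := h2.sub h1
    exact this.congr_deriv (by ring)
  · intro x hx
    have hl : Real.log x ≤ 0 := Real.log_nonpos (le_of_lt hx.1) (by linarith [hx.2])
    have hl2 : (0:ℝ) ≤ Real.log 2 := Real.log_nonneg one_le_two
    linarith

lemma intervalIntegrable_Kfun {σ : ℝ} (hσ : 0 < σ) (hσ2 : σ ≤ 1/2) :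
    IntervalIntegrable Kfun volume 0 σ := by
  rw [intervalIntegrable_iff_integrableOn_Ioc_of_le hσ.le]
  apply (integrableOn_dom hσ hσ2).mono' ?_ ?_
  · have hK : Kfun = fun x => -Real.log |Real.sinh x / Real.cosh x| :=
      funext fun x => by rw [Kfun, Real.tanh_eq_sinh_div_cosh]
    rw [hK]
    exact ((Real.measurable_log.comp
      (measurable_abs.comp (Real.continuous_sinh.measurable.div
        Real.continuous_cosh.measurable))).neg).aestronglyMeasurable.restrict
  · filter_upwards [ae_restrict_mem measurableSet_Ioc] with x hx
    rw [Real.norm_of_nonneg (Kfun_nonneg x)]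
    exact Kfun_le hx.1 (le_trans hx.2 hσ2)

lemma intervalIntegrable_Kfun_neg {σ : ℝ} (hσ : 0 < σ) (hσ2 : σ ≤ 1/2) :
    IntervalIntegrable Kfun volume (-σ) 0 := by
  have h := (intervalIntegrable_Kfun hσ hσ2).symm
  have := (IntervalIntegrable.iff_comp_neg (f := Kfun) (a := σ) (b := 0)).mp h
  simpa [Kfun_even] using this

theorem stmt13' : True := trivial

theorem stmt13 :
    ∃ C > (0:ℝ), ∀ σ : ℝ, 0 < σ → σ ≤ 1/2 →
      (∫ x : ℝ, Mfun σ x) ≤ C * σ * (|Real.log σ| + 1) ∧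
      (∫ x : ℝ, Mfun σ x) ≤ 2 * ∫ x in (0:ℝ)..σ, Kfun x := by
  refine ⟨4, by norm_num, fun σ hσ hσ2 => ?_⟩
  have hK0σ := intervalIntegrable_Kfun hσ hσ2
  have hKneg := intervalIntegrable_Kfun_neg hσ hσ2
  have hKfull : IntervalIntegrable Kfun volume (-σ) σ := hKneg.trans hK0σ
  have hM_indicator : Mfun σ = (Set.Icc (-σ) σ).indicator (Mfun σ) := by
    funext x
    rw [Set.indicator_apply]
    split_ifs with h
    · rfl
    · have habs : σ < |x| := by
        rw [Set.mem_Icc, ← abs_le] at h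
        exact lt_of_not_ge h
      simp only [Mfun, Lfun, if_neg (not_le.mpr habs), Kfun_abs, sub_self]
  have hd := deriv_Kfun_nonpos hσ
  have hMleK : ∀ x ∈ Set.Icc (-σ) σ, Mfun σ x ≤ Kfun x := by
    intro x hx
    rw [Set.mem_Icc, ← abs_le] at hx
    simp only [Mfun, Lfun, if_pos hx]
    have h1 : 0 ≤ (|x| - σ) * deriv Kfun σ := by nlinarith [hx, hd]
    have h2 := Kfun_nonneg σ
    linarith
  have hKIcc : IntegrableOn Kfun (Set.Icc (-σ) σ) volume := by
    rw [integrableOn_Icc_iff_integrableOn_Ioc]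
    exact hKfull.1
  have hMIcc : IntegrableOn (Mfun σ) (Set.Icc (-σ) σ) volume := by
    have hc : Continuous (fun x : ℝ => Kfun σ + (|x| - σ) * deriv Kfun σ) :=
      continuous_const.add ((continuous_abs.sub continuous_const).mul continuous_const)
    have hI : IntegrableOn (fun x => Kfun x - (Kfun σ + (|x| - σ) * deriv Kfun σ))
        (Set.Icc (-σ) σ) volume :=
      hKIcc.sub (hc.integrableOn_Icc)
    apply hI.congr_fun ?_ measurableSet_Icc
    intro x hx
    rw [Set.mem_Icc, ← abs_le] at hx
    simp only [Mfun, Lfun, if_pos hx]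
  have hstep1 : (∫ x, Mfun σ x) = ∫ x in Set.Icc (-σ) σ, Mfun σ x := by
    conv_lhs => rw [hM_indicator]
    rw [MeasureTheory.integral_indicator measurableSet_Icc]
  have hsym : ∫ x in (-σ)..(0:ℝ), Kfun x = ∫ x in (0:ℝ)..σ, Kfun x := by
    have h := intervalIntegral.integral_comp_neg (a := (0:ℝ)) (b := σ) Kfun
    simp only [Kfun_even, neg_zero] at h
    exact h.symm
  have hstep3 : ∫ x in Set.Icc (-σ) σ, Kfun x = 2 * ∫ x in (0:ℝ)..σ, Kfun x := by
    rw [MeasureTheory.integral_Icc_eq_integral_Ioc,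
      ← intervalIntegral.integral_of_le (by linarith : -σ ≤ σ),
      ← intervalIntegral.integral_add_adjacent_intervals hKneg hK0σ, hsym]
    ring
  have hmain : (∫ x, Mfun σ x) ≤ 2 * ∫ x in (0:ℝ)..σ, Kfun x := by
    rw [hstep1, ← hstep3]
    exact setIntegral_mono_on hMIcc hKIcc measurableSet_Icc hMleK
  refine ⟨?_, hmain⟩
  have hg : IntervalIntegrable (fun x => Real.log 2 - Real.log x) volume 0 σ := by
    rw [intervalIntegrable_iff_integrableOn_Ioc_of_le hσ.le]
    exact integrableOn_dom hσ hσ2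
  have hmono : ∫ x in (0:ℝ)..σ, Kfun x ≤ ∫ x in (0:ℝ)..σ, (Real.log 2 - Real.log x) := by
    apply intervalIntegral.integral_mono_on hσ.le hK0σ hg
    intro x hx
    rcases eq_or_lt_of_le hx.1 with h | h
    · subst h
      simp [Kfun, Real.log_nonneg one_le_two]
    · exact Kfun_le h (le_trans hx.2 hσ2)
  have hval : ∫ x in (0:ℝ)..σ, (Real.log 2 - Real.log x)
      = σ * Real.log 2 + σ - σ * Real.log σ := by
    rw [intervalIntegral.integral_eq_sub_of_hasDerivAt_of_le hσ.le
      (f := fun x => x * Real.log 2 + x - x * Real.log x)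
      (((continuous_id.mul continuous_const).add continuous_id).continuousOn.sub
        Real.continuous_mul_log.continuousOn)
      (fun x hx => by
        have h1 : HasDerivAt (fun x : ℝ => x * Real.log x) (Real.log x + 1) x :=
          Real.hasDerivAt_mul_log (ne_of_gt hx.1)
        have h2 : HasDerivAt (fun x : ℝ => x * Real.log 2 + x) (1 * Real.log 2 + 1) x :=
          ((hasDerivAt_id x).mul_const _).add (hasDerivAt_id x)
        have := h2.sub h1
        exact this.congr_deriv (by ring)) hg]
    simp
  have hlogσ : Real.log σ ≤ 0 := Real.log_nonpos hσ.le (by linarith)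
  have habs : |Real.log σ| = -Real.log σ := abs_of_nonpos hlogσ
  have hlog2 : Real.log 2 ≤ 1 := by
    have := Real.log_two_lt_d9
    linarith
  calc (∫ x, Mfun σ x) ≤ 2 * ∫ x in (0:ℝ)..σ, Kfun x := hmain
    _ ≤ 2 * (σ * Real.log 2 + σ - σ * Real.log σ) := by rw [← hval]; linarith
    _ ≤ 4 * σ * (|Real.log σ| + 1) := by rw [habs]; nlinarith
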